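/- If X^n is i.i.d. according to P_X, then for every D ≥ 0 and every z^n ∈ 𝒵^n, P[ d(X^n, z^n) ≤ D ] ≤ (n+1)^{|𝒳||𝒵|} · 2^{ −n · min_{Q_X} [ R(D, Q_X) + D(Q_X ‖ P_X) ] }, where the minimum is over all pmfs Q_X on 𝒳, R(D, Q_X) is the rate-distortion function of the source Q_X, and D(Q_X ‖ P_X) is the relative entropy (in bits). -/

import Mathlib

open scoped BigOperators
open Classical

def IsPMF {A : Type*} [Fintype A] (p : A → ℝ) : Prop :=
  (∀ a, 0 ≤ p a) ∧ ∑ a, p a = 1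

def IsCondPMF {A B : Type*} [Fintype B] (W : A → B → ℝ) : Prop :=
  ∀ a, IsPMF (W a)

noncomputable def mutualInfo {A B : Type*} [Fintype A] [Fintype B] (q : A × B → ℝ) : ℝ :=
  ∑ p : A × B, q p * Real.logb 2 (q p / ((∑ b, q (p.1, b)) * (∑ a, q (a, p.2))))

noncomputable def dseq {X Z : Type*} (d : X → Z → ℝ) {n : ℕ} (x : Fin n → X) (z : Fin n → Z) : ℝ :=
  (∑ i, d (x i) (z i)) / n

noncomputable def iidPMF {X : Type*} [Fintype X] (P : X → ℝ) (n : ℕ) : (Fin n → X) → ℝ :=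
  fun x => ∏ i, P (x i)

/-- The rate-distortion function of the source `Q`:
`R(D, Q) = min over P_{Z|X} with E_Q[d(X,Z)] ≤ D of I(X;Z)`. -/
noncomputable def RDF {X Z : Type*} [Fintype X] [Fintype Z] (Q : X → ℝ) (d : X → Z → ℝ)
    (D : ℝ) : ℝ :=
  sInf { r | ∃ V : X → Z → ℝ, IsCondPMF V ∧
    (∑ x, ∑ z, Q x * V x z * d x z) ≤ D ∧
    r = mutualInfo (fun p : X × Z => Q p.1 * V p.1 p.2) }

/-- Relative entropy `D(Q‖P)` in bits. -/
noncomputable def relEnt {X : Type*} [Fintype X] (Q P : X → ℝ) : ℝ :=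
  ∑ x, Q x * Real.logb 2 (Q x / P x)

/- ### Helper lemmas -/


lemma gibbs_aux {T : Type*} [Fintype T] (q r : T → ℝ)
    (hq : ∀ t, 0 ≤ q t) (hq1 : ∑ t, q t = 1)
    (hr : ∀ t, 0 ≤ r t) (hr1 : ∑ t, r t ≤ 1)
    (hqr : ∀ t, 0 < q t → 0 < r t) :
    0 ≤ ∑ t, q t * Real.logb 2 (q t / r t) := by
  have hlog2 : (0:ℝ) < Real.log 2 := Real.log_pos one_lt_two
  have key : ∀ t, (q t - r t) / Real.log 2 ≤ q t * Real.logb 2 (q t / r t) := by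
    intro t
    rcases eq_or_lt_of_le (hq t) with h0 | h0
    · rw [← h0, zero_mul, zero_sub]
      exact div_nonpos_of_nonpos_of_nonneg (neg_nonpos.mpr (hr t)) hlog2.le
    · have hrt := hqr t h0
      have h1 : Real.log (r t / q t) ≤ r t / q t - 1 :=
        Real.log_le_sub_one_of_pos (div_pos hrt h0)
      have h2 : Real.log (q t / r t) = - Real.log (r t / q t) := by
        rw [← Real.log_inv, inv_div]
      have h3 : q t - r t ≤ q t * Real.log (q t / r t) := by
        rw [h2]
        have h4 := mul_le_mul_of_nonneg_left h1 h0.le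
        rw [mul_sub, mul_one, mul_div_cancel₀ _ (ne_of_gt h0)] at h4
        linarith
      rw [Real.logb, mul_div_assoc']
      gcongr
  have hsum := Finset.sum_le_sum (fun t (_ : t ∈ Finset.univ) => key t)
  rw [← Finset.sum_div, Finset.sum_sub_distrib, hq1] at hsum
  refine le_trans ?_ hsum
  apply div_nonneg _ hlog2.le
  linarith

lemma mutualInfo_nonneg {A B : Type*} [Fintype A] [Fintype B] (q : A × B → ℝ)
    (hq : ∀ p, 0 ≤ q p) (h1 : ∑ p, q p = 1) : 0 ≤ mutualInfo q := by
  have hA : ∑ a, ∑ b, q (a, b) = 1 := by rw [← Fintype.sum_prod_type]; exact h1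
  have hB : ∑ b, ∑ a, q (a, b) = 1 := by rw [Finset.sum_comm]; exact hA
  have hsum : ∑ p : A × B, (∑ b, q (p.1, b)) * (∑ a, q (a, p.2)) ≤ 1 := by
    have heq : ∑ p : A × B, (∑ b, q (p.1, b)) * (∑ a, q (a, p.2))
        = (∑ a : A, ∑ b, q (a, b)) * (∑ b : B, ∑ a, q (a, b)) := by
      rw [Fintype.sum_prod_type]
      exact (Finset.sum_mul_sum Finset.univ Finset.univ (fun a => ∑ b, q (a, b))
        (fun b => ∑ a, q (a, b))).symm
    rw [heq, hA, hB, one_mul]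
  have hqr : ∀ p : A × B, 0 < q p → 0 < (∑ b, q (p.1, b)) * (∑ a, q (a, p.2)) := by
    intro p hp
    have h1' : q p ≤ ∑ b, q (p.1, b) :=
      Finset.single_le_sum (fun b _ => hq (p.1, b)) (Finset.mem_univ p.2)
    have h2' : q p ≤ ∑ a, q (a, p.2) :=
      Finset.single_le_sum (fun a _ => hq (a, p.2)) (Finset.mem_univ p.1)
    exact mul_pos (lt_of_lt_of_le hp h1') (lt_of_lt_of_le hp h2')
  have := gibbs_aux q (fun p => (∑ b, q (p.1, b)) * (∑ a, q (a, p.2))) hq h1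
    (fun p => mul_nonneg (Finset.sum_nonneg fun b _ => hq _) (Finset.sum_nonneg fun a _ => hq _))
    hsum hqr
  simpa [mutualInfo] using this

lemma mutualInfo_pmf_nonneg {X Z : Type*} [Fintype X] [Fintype Z] (Q : X → ℝ) (hQ : IsPMF Q)
    (V : X → Z → ℝ) (hV : IsCondPMF V) :
    0 ≤ mutualInfo (fun p : X × Z => Q p.1 * V p.1 p.2) := by
  apply mutualInfo_nonneg
  · intro p; exact mul_nonneg (hQ.1 p.1) ((hV p.1).1 p.2)
  · rw [Fintype.sum_prod_type]
    have h : ∀ a, ∑ b, Q a * V a b = Q a := by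
      intro a; rw [← Finset.mul_sum, (hV a).2, mul_one]
    rw [Finset.sum_congr rfl fun a _ => h a]
    exact hQ.2

lemma RDF_nonneg {X Z : Type*} [Fintype X] [Fintype Z] (Q : X → ℝ) (hQ : IsPMF Q)
    (d : X → Z → ℝ) (D : ℝ) : 0 ≤ RDF Q d D := by
  apply Real.sInf_nonneg
  rintro r ⟨V, hV, -, rfl⟩
  exact mutualInfo_pmf_nonneg Q hQ V hV

lemma RDF_le {X Z : Type*} [Fintype X] [Fintype Z] (Q : X → ℝ) (hQ : IsPMF Q)
    (d : X → Z → ℝ) (D : ℝ) (V : X → Z → ℝ) (hV : IsCondPMF V)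
    (hC : (∑ x, ∑ z, Q x * V x z * d x z) ≤ D) :
    RDF Q d D ≤ mutualInfo (fun p : X × Z => Q p.1 * V p.1 p.2) := by
  apply csInf_le
  · refine ⟨0, ?_⟩
    rintro r ⟨V', hV', -, rfl⟩
    exact mutualInfo_pmf_nonneg Q hQ V' hV'
  · exact ⟨V, hV, hC, rfl⟩

lemma relEnt_ge {X : Type*} [Fintype X] (Q P : X → ℝ) (hQ : IsPMF Q) (hP : IsPMF P) :
    -(2 * (Fintype.card X : ℝ)) ≤ relEnt Q P := by
  have hlog2 : (0:ℝ) < Real.log 2 := Real.log_pos one_lt_two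
  have hl2 : (1:ℝ)/2 < Real.log 2 := by
    have := Real.log_two_gt_d9; linarith
  have key : ∀ a, (-2 : ℝ) ≤ Q a * Real.logb 2 (Q a / P a) := by
    intro a
    rcases eq_or_lt_of_le (hQ.1 a) with h0 | h0
    · rw [← h0, zero_mul]; norm_num
    rcases eq_or_lt_of_le (hP.1 a) with hp0 | hp0
    · rw [← hp0, div_zero, Real.logb_zero, mul_zero]; norm_num
    have hP1 : P a ≤ 1 := by
      rw [← hP.2]; exact Finset.single_le_sum (fun i _ => hP.1 i) (Finset.mem_univ a)
    have h1 : Q a ≤ Q a / P a := by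
      rw [le_div_iff₀ hp0]; nlinarith
    have h2 : Real.logb 2 (Q a) ≤ Real.logb 2 (Q a / P a) :=
      Real.logb_le_logb_of_le one_lt_two h0 h1
    have h6 : (-1:ℝ) ≤ Q a * Real.log (Q a) := by
      have h3 := Real.log_le_sub_one_of_pos (show (0:ℝ) < (Q a)⁻¹ from inv_pos.mpr h0)
      rw [Real.log_inv] at h3
      have h4 := mul_le_mul_of_nonneg_left h3 h0.le
      rw [mul_sub, mul_inv_cancel₀ (ne_of_gt h0), mul_neg] at h4
      linarith
    have h5 : (-2:ℝ) ≤ Q a * Real.logb 2 (Q a) := by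
      rw [Real.logb, mul_div_assoc', le_div_iff₀ hlog2]
      nlinarith
    calc (-2:ℝ) ≤ Q a * Real.logb 2 (Q a) := h5
      _ ≤ Q a * Real.logb 2 (Q a / P a) := mul_le_mul_of_nonneg_left h2 h0.le
  have hsum := Finset.sum_le_sum (fun a (_ : a ∈ Finset.univ) => key a)
  have : ∑ _a : X, (-2:ℝ) = -(2 * (Fintype.card X : ℝ)) := by
    rw [Finset.sum_const, Finset.card_univ, nsmul_eq_mul]; ring
  rw [this] at hsum
  exact hsum

lemma prod_comp_pair {X Z : Type*} [Fintype X] [Fintype Z] {n : ℕ}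
    (x : Fin n → X) (z : Fin n → Z) (f : X × Z → ℝ) :
    ∏ i, f (x i, z i) =
      ∏ p : X × Z, f p ^ (Finset.univ.filter (fun i => (x i, z i) = p)).card := by
  rw [← Finset.prod_fiberwise_of_maps_to (g := fun i => (x i, z i))
    (fun i (_ : i ∈ Finset.univ) => Finset.mem_univ (x i, z i)) (fun i => f (x i, z i))]
  apply Finset.prod_congr rfl
  intro p _
  rw [← Finset.prod_const]
  apply Finset.prod_congr rfl
  intro i hi
  rw [Finset.mem_filter] at hi
  rw [hi.2]

lemma sum_comp_pair {X Z : Type*} [Fintype X] [Fintype Z] {n : ℕ}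
    (x : Fin n → X) (z : Fin n → Z) (f : X × Z → ℝ) :
    ∑ i, f (x i, z i) =
      ∑ p : X × Z, ((Finset.univ.filter (fun i => (x i, z i) = p)).card : ℝ) * f p := by
  rw [← Finset.sum_fiberwise_of_maps_to (g := fun i => (x i, z i))
    (fun i (_ : i ∈ Finset.univ) => Finset.mem_univ (x i, z i)) (fun i => f (x i, z i))]
  apply Finset.sum_congr rfl
  intro p _
  rw [← nsmul_eq_mul, ← Finset.sum_const]
  apply Finset.sum_congr rfl
  intro i hi
  rw [Finset.mem_filter] at hi
  rw [hi.2]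

lemma sum_prod_pi {X : Type*} [Fintype X] {n : ℕ} (g : Fin n → X → ℝ) :
    ∑ x : Fin n → X, ∏ i, g i (x i) = ∏ i, ∑ a, g i a := by
  rw [Finset.prod_univ_sum, Fintype.piFinset_univ]

set_option maxHeartbeats 1000000 in
/-- **Sanov-type bound on the probability of low distortion.** For `X^n` i.i.d. `P_X`,
any `D ≥ 0` and any `z^n`:
`P[d(X^n,z^n) ≤ D] ≤ (n+1)^{|𝒳||𝒵|} · 2^{-n · min_Q [R(D,Q) + D(Q‖P)]}`. -/
theorem distortion_probability_exponent
    {X Z : Type*} [Fintype X] [Fintype Z] [Nonempty X] [Nonempty Z]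
    (P : X → ℝ) (hP : IsPMF P)
    (d : X → Z → ℝ) (hd_nonneg : ∀ x z, 0 ≤ d x z) (hd_zero : ∀ x, ∃ z, d x z = 0)
    (D : ℝ) (hD : 0 ≤ D) (n : ℕ) (z : Fin n → Z) :
    (∑ x : Fin n → X, iidPMF P n x * (if dseq d x z ≤ D then (1:ℝ) else 0))
      ≤ ((n : ℝ) + 1) ^ (Fintype.card X * Fintype.card Z) *
        2 ^ (-(n : ℝ) * sInf { v : ℝ | ∃ Q : X → ℝ, IsPMF Q ∧ v = RDF Q d D + relEnt Q P }) := by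

  classical
  set E := sInf { v : ℝ | ∃ Q : X → ℝ, IsPMF Q ∧ v = RDF Q d D + relEnt Q P } with hE
  rcases Nat.eq_zero_or_pos n with hn | hn
  · subst hn
    simp only [iidPMF, dseq]
    norm_num [hD]
  have hnR : (0:ℝ) < (n:ℝ) := by exact_mod_cast hn
  have hcnt_le : ∀ (x : Fin n → X) (p : X × Z),
      (Finset.univ.filter (fun i => (x i, z i) = p)).card ≤ n := by
    intro x p
    calc (Finset.univ.filter (fun i => (x i, z i) = p)).card
        ≤ (Finset.univ : Finset (Fin n)).card := Finset.card_filter_le _ _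
      _ = n := by simp
  set τ : (Fin n → X) → (X × Z → Fin (n+1)) :=
    fun x p => ⟨(Finset.univ.filter (fun i => (x i, z i) = p)).card,
      Nat.lt_succ_of_le (hcnt_le x p)⟩ with hτ
  have hpos : (0:ℝ) < 2 ^ (-(n:ℝ) * E) := Real.rpow_pos_of_pos two_pos _
  have hbound : ∀ t : X × Z → Fin (n+1),
      (∑ x ∈ Finset.univ.filter (fun x => τ x = t),
        iidPMF P n x * (if dseq d x z ≤ D then (1:ℝ) else 0)) ≤ 2 ^ (-(n:ℝ) * E) := by
    intro t
    by_cases hex : ∃ x₀ ∈ Finset.univ.filter (fun x => τ x = t), dseq d x₀ z ≤ D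
    case neg =>
      rw [Finset.sum_eq_zero]
      · exact hpos.le
      · intro x hx
        rw [if_neg (fun h => hex ⟨x, hx, h⟩), mul_zero]
    case pos =>
    obtain ⟨x₀, hx₀S, hx₀D⟩ := hex
    set N : X × Z → ℕ := fun p => (Finset.univ.filter (fun i => (x₀ i, z i) = p)).card
      with hNdef
    have hcnt_eq : ∀ x ∈ Finset.univ.filter (fun x => τ x = t), ∀ p,
        (Finset.univ.filter (fun i => (x i, z i) = p)).card = N p := by
      intro x hx p
      rw [Finset.mem_filter] at hx hx₀S
      have h : τ x = τ x₀ := by rw [hx.2, hx₀S.2]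
      exact congrArg Fin.val (congrFun h p)
    have hNsum : ∑ p : X × Z, N p = n := by
      have h := Finset.card_eq_sum_card_fiberwise
        (f := fun i => (x₀ i, z i)) (s := (Finset.univ : Finset (Fin n)))
        (t := (Finset.univ : Finset (X × Z))) (fun i _ => Finset.mem_univ _)
      simpa [hNdef] using h.symm
    have hNsumR : ∑ p : X × Z, (N p : ℝ) = (n : ℝ) := by exact_mod_cast hNsum
    set Qj : X × Z → ℝ := fun p => (N p : ℝ) / n with hQj
    have hQjnn : ∀ p, 0 ≤ Qj p := fun p => div_nonneg (Nat.cast_nonneg _) hnR.le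
    have hQj1 : ∑ p, Qj p = 1 := by
      simp only [hQj]
      rw [← Finset.sum_div, hNsumR, div_self hnR.ne']
    set QX : X → ℝ := fun a => ∑ b, Qj (a, b) with hQX
    have hQXnn : ∀ a, 0 ≤ QX a := fun a => Finset.sum_nonneg fun b _ => hQjnn _
    have hQX1 : ∑ a, QX a = 1 := by
      simp only [hQX]
      rw [← Fintype.sum_prod_type]
      exact hQj1
    have hQXpmf : IsPMF QX := ⟨hQXnn, hQX1⟩
    have hdseqc : ∀ x ∈ Finset.univ.filter (fun x => τ x = t),
        dseq d x z = ∑ p : X × Z, Qj p * d p.1 p.2 := by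
      intro x hx
      have hg : ∑ i, d (x i) (z i) = ∑ p : X × Z, (N p : ℝ) * d p.1 p.2 :=
        calc (∑ i, d (x i) (z i)) = ∑ i, (fun p : X × Z => d p.1 p.2) (x i, z i) := rfl
          _ = ∑ p : X × Z, ((Finset.univ.filter (fun i => (x i, z i) = p)).card : ℝ) *
                (fun p : X × Z => d p.1 p.2) p := sum_comp_pair x z (fun p : X × Z => d p.1 p.2)
          _ = ∑ p : X × Z, (N p : ℝ) * d p.1 p.2 :=
                Finset.sum_congr rfl fun p _ => by rw [hcnt_eq x hx p]
      show (∑ i, d (x i) (z i)) / n = _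
      rw [hg, Finset.sum_div]
      refine Finset.sum_congr rfl fun p _ => ?_
      simp only [hQj]
      ring
    have hDle : ∑ p : X × Z, Qj p * d p.1 p.2 ≤ D := by
      rw [← hdseqc x₀ hx₀S]; exact hx₀D
    have hind : (∑ x ∈ Finset.univ.filter (fun x => τ x = t),
        iidPMF P n x * (if dseq d x z ≤ D then (1:ℝ) else 0))
        = ∑ x ∈ Finset.univ.filter (fun x => τ x = t), iidPMF P n x := by
      refine Finset.sum_congr rfl fun x hx => ?_
      rw [if_pos, mul_one]
      rw [hdseqc x hx]; exact hDle
    rw [hind]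
    by_cases hPsupp : ∃ p : X × Z, 0 < N p ∧ P p.1 = 0
    case pos =>
      obtain ⟨p, hNp, hPp⟩ := hPsupp
      rw [Finset.sum_eq_zero]
      · exact hpos.le
      · intro x hx
        have hc : 0 < (Finset.univ.filter (fun i => (x i, z i) = p)).card := by
          rw [hcnt_eq x hx p]; exact hNp
        rw [Finset.card_pos] at hc
        obtain ⟨i, hi⟩ := hc
        rw [Finset.mem_filter] at hi
        have hxi : x i = p.1 := congrArg Prod.fst hi.2
        show (∏ j, P (x j)) = 0
        apply Finset.prod_eq_zero (Finset.mem_univ i)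
        rw [hxi, hPp]
    case neg =>
    push_neg at hPsupp
    have hPpos : ∀ p : X × Z, 0 < N p → 0 < P p.1 := fun p hp =>
      lt_of_le_of_ne (hP.1 p.1) (Ne.symm (hPsupp p hp))
    set NZ : Z → ℕ := fun b => ∑ a, N (a, b) with hNZ
    have hNle : ∀ p : X × Z, N p ≤ NZ p.2 := by
      intro p
      have h := Finset.single_le_sum (f := fun a => N (a, p.2))
        (fun a _ => Nat.zero_le _) (Finset.mem_univ p.1)
      simpa [hNZ] using h
    have hcardX : (0:ℝ) < (Fintype.card X : ℝ) := by
      exact_mod_cast Fintype.card_pos (α := X)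
    have hcardZ : (0:ℝ) < (Fintype.card Z : ℝ) := by
      exact_mod_cast Fintype.card_pos (α := Z)
    set W : Z → X → ℝ :=
      fun b a => if NZ b = 0 then (Fintype.card X : ℝ)⁻¹ else (N (a, b) : ℝ) / (NZ b) with hW
    have hWnn : ∀ b a, 0 ≤ W b a := by
      intro b a
      simp only [hW]
      split
      · positivity
      · exact div_nonneg (Nat.cast_nonneg _) (Nat.cast_nonneg _)
    have hWsum : ∀ b, ∑ a, W b a = 1 := by
      intro b
      by_cases h : NZ b = 0
      · simp only [hW, if_pos h]
        rw [Finset.sum_const, Finset.card_univ, nsmul_eq_mul, mul_inv_cancel₀ hcardX.ne']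
      · simp only [hW, if_neg h]
        rw [← Finset.sum_div]
        rw [show ∑ a, (N (a, b) : ℝ) = (NZ b : ℝ) by simp only [hNZ]; push_cast; rfl]
        exact div_self (by exact_mod_cast h)
    have hWpmf : ∀ b, IsPMF (W b) := fun b => ⟨hWnn b, hWsum b⟩
    have hWpos : ∀ p : X × Z, 0 < N p → 0 < W p.2 p.1 := by
      intro p hp
      have hz : NZ p.2 ≠ 0 := by
        intro h
        have := hNle p
        omega
      simp only [hW, if_neg hz]
      apply div_pos
      · exact_mod_cast hp
      · exact_mod_cast Nat.pos_of_ne_zero hz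
    set c : ℝ := ∏ p : X × Z, (P p.1 / W p.2 p.1) ^ N p with hc
    have hiid : ∀ x ∈ Finset.univ.filter (fun x => τ x = t),
        iidPMF P n x = c * ∏ i, W (z i) (x i) := by
      intro x hx
      have h1 : iidPMF P n x = ∏ p : X × Z, (P p.1) ^ N p :=
        calc iidPMF P n x = ∏ i, (fun p : X × Z => P p.1) (x i, z i) := rfl
          _ = ∏ p : X × Z, (fun p : X × Z => P p.1) p ^
                (Finset.univ.filter (fun i => (x i, z i) = p)).card :=
                  prod_comp_pair x z (fun p : X × Z => P p.1)
          _ = ∏ p : X × Z, (P p.1) ^ N p :=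
                Finset.prod_congr rfl fun p _ => by rw [hcnt_eq x hx p]
      have h3 : ∏ i, W (z i) (x i) = ∏ p : X × Z, (W p.2 p.1) ^ N p :=
        calc (∏ i, W (z i) (x i)) = ∏ i, (fun p : X × Z => W p.2 p.1) (x i, z i) := rfl
          _ = ∏ p : X × Z, (fun p : X × Z => W p.2 p.1) p ^
                (Finset.univ.filter (fun i => (x i, z i) = p)).card :=
                  prod_comp_pair x z (fun p : X × Z => W p.2 p.1)
          _ = ∏ p : X × Z, (W p.2 p.1) ^ N p :=
                Finset.prod_congr rfl fun p _ => by rw [hcnt_eq x hx p]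
      rw [h1, h3, hc, ← Finset.prod_mul_distrib]
      refine Finset.prod_congr rfl fun p _ => ?_
      rcases Nat.eq_zero_or_pos (N p) with h | h
      · rw [h, pow_zero, pow_zero, pow_zero, mul_one]
      · rw [← mul_pow, div_mul_cancel₀ _ (ne_of_gt (hWpos p h))]
    have hWprod_le : ∑ x ∈ Finset.univ.filter (fun x => τ x = t),
        ∏ i, W (z i) (x i) ≤ 1 := by
      have htot : ∑ x : Fin n → X, ∏ i, W (z i) (x i) = 1 := by
        rw [sum_prod_pi (fun i a => W (z i) a)]
        rw [Finset.prod_congr rfl fun i (_ : i ∈ Finset.univ) => hWsum (z i)]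
        exact Finset.prod_const_one
      rw [← htot]
      apply Finset.sum_le_sum_of_subset_of_nonneg (Finset.filter_subset _ _)
      intro x _ _
      exact Finset.prod_nonneg fun i _ => hWnn _ _
    have hcnn : 0 ≤ c := by
      rw [hc]
      exact Finset.prod_nonneg fun p _ => pow_nonneg (div_nonneg (hP.1 _) (hWnn _ _)) _
    have hstep1 : ∑ x ∈ Finset.univ.filter (fun x => τ x = t), iidPMF P n x ≤ c := by
      rw [Finset.sum_congr rfl hiid, ← Finset.mul_sum]
      calc c * ∑ x ∈ Finset.univ.filter (fun x => τ x = t), ∏ i, W (z i) (x i)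
          ≤ c * 1 := mul_le_mul_of_nonneg_left hWprod_le hcnn
        _ = c := mul_one c
    have hcpos : 0 < c := by
      rw [hc]
      apply Finset.prod_pos
      intro p _
      rcases Nat.eq_zero_or_pos (N p) with h | h
      · rw [h, pow_zero]; norm_num
      · exact pow_pos (div_pos (hPpos p h) (hWpos p h)) _
    have hclogb : Real.logb 2 c
        = ∑ p : X × Z, (N p : ℝ) * Real.logb 2 (P p.1 / W p.2 p.1) := by
      rw [hc, Real.logb, Real.log_prod]
      · rw [Finset.sum_div]
        refine Finset.sum_congr rfl fun p _ => ?_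
        rw [Real.log_pow, Real.logb, mul_div_assoc]
      · intro p _
        rcases Nat.eq_zero_or_pos (N p) with h | h
        · rw [h, pow_zero]; norm_num
        · exact ne_of_gt (pow_pos (div_pos (hPpos p h) (hWpos p h)) _)
    have hQZval : ∀ b, (∑ a, Qj (a, b)) = (NZ b : ℝ) / n := by
      intro b
      simp only [hQj]
      rw [← Finset.sum_div]
      congr 1
      simp only [hNZ]; push_cast; rfl
    have hkey : (n:ℝ) * (mutualInfo Qj + relEnt QX P) = - Real.logb 2 c := by
      have hmi : (n:ℝ) * mutualInfo Qj = ∑ p : X × Z, (N p : ℝ) *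
          Real.logb 2 (Qj p / ((∑ b, Qj (p.1, b)) * (∑ a, Qj (a, p.2)))) := by
        rw [mutualInfo, Finset.mul_sum]
        refine Finset.sum_congr rfl fun p _ => ?_
        have h : (n:ℝ) * Qj p = (N p : ℝ) := by
          simp only [hQj]; field_simp
        rw [← mul_assoc, h]
      have hre : (n:ℝ) * relEnt QX P = ∑ p : X × Z, (N p : ℝ) *
          Real.logb 2 (QX p.1 / P p.1) := by
        rw [relEnt, Finset.mul_sum, Fintype.sum_prod_type]
        refine Finset.sum_congr rfl fun a _ => ?_
        have h1 : (n:ℝ) * QX a = ∑ b, (N (a, b) : ℝ) := by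
          simp only [hQX, hQj]
          rw [← Finset.sum_div]
          field_simp
        rw [← mul_assoc, h1, Finset.sum_mul]
      rw [mul_add, hmi, hre, ← Finset.sum_add_distrib, hclogb, ← Finset.sum_neg_distrib]
      refine Finset.sum_congr rfl fun p _ => ?_
      rcases Nat.eq_zero_or_pos (N p) with h | h
      · rw [h]; norm_num
      have hQjp : 0 < Qj p := by
        simp only [hQj]
        exact div_pos (by exact_mod_cast h) hnR
      have hQXp : 0 < (∑ b, Qj (p.1, b)) := by
        refine lt_of_lt_of_le hQjp ?_
        have := Finset.single_le_sum (f := fun b => Qj (p.1, b))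
          (fun b _ => hQjnn _) (Finset.mem_univ p.2)
        simpa using this
      have hQZp : 0 < (∑ a, Qj (a, p.2)) := by
        refine lt_of_lt_of_le hQjp ?_
        have := Finset.single_le_sum (f := fun a => Qj (a, p.2))
          (fun a _ => hQjnn _) (Finset.mem_univ p.1)
        simpa using this
      have hPp := hPpos p h
      have hWp := hWpos p h
      have hNZb : NZ p.2 ≠ 0 := by
        intro hcontra
        have := hNle p
        omega
      have hNZbR : ((NZ p.2 : ℕ) : ℝ) ≠ 0 := by exact_mod_cast hNZb
      have hWval : W p.2 p.1 = Qj p / (∑ a, Qj (a, p.2)) := by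
        simp only [hW, if_neg hNZb, hQZval p.2, hQj]
        rw [← Finset.sum_div, div_div_div_cancel_right₀ hnR.ne']
        congr 1
        simp only [hNZ, Nat.cast_sum]
      have hQXeq : QX p.1 = ∑ b, Qj (p.1, b) := by simp only [hQX]
      have hABC : (Qj p / ((∑ b, Qj (p.1, b)) * (∑ a, Qj (a, p.2))))
          * (QX p.1 / P p.1) * (P p.1 / W p.2 p.1) = 1 := by
        rw [hWval, hQXeq]
        field_simp
      have hA : 0 < Qj p / ((∑ b, Qj (p.1, b)) * (∑ a, Qj (a, p.2))) :=
        div_pos hQjp (mul_pos hQXp hQZp)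
      have hB : 0 < QX p.1 / P p.1 := by
        rw [hQXeq]; exact div_pos hQXp hPp
      have hC : 0 < P p.1 / W p.2 p.1 := div_pos hPp hWp
      have hlogsum : Real.logb 2 (Qj p / ((∑ b, Qj (p.1, b)) * (∑ a, Qj (a, p.2))))
          + Real.logb 2 (QX p.1 / P p.1) + Real.logb 2 (P p.1 / W p.2 p.1) = 0 := by
        rw [← Real.logb_mul (ne_of_gt hA) (ne_of_gt hB),
          ← Real.logb_mul (ne_of_gt (mul_pos hA hB)) (ne_of_gt hC), hABC, Real.logb_one]
      linear_combination (N p : ℝ) * hlogsum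
    have hc2 : (2:ℝ) ^ (-(n:ℝ) * (mutualInfo Qj + relEnt QX P)) = c := by
      have h : -(n:ℝ) * (mutualInfo Qj + relEnt QX P) = Real.logb 2 c := by
        rw [neg_mul, hkey, neg_neg]
      rw [h]
      exact Real.rpow_logb two_pos (by norm_num) hcpos
    set V : X → Z → ℝ :=
      fun a b => if QX a = 0 then (Fintype.card Z : ℝ)⁻¹ else Qj (a, b) / QX a with hV
    have hQj_le_QX : ∀ a b, Qj (a, b) ≤ QX a := by
      intro a b
      simp only [hQX]
      exact Finset.single_le_sum (fun b' _ => hQjnn _) (Finset.mem_univ b)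
    have hVkey : ∀ a b, QX a * V a b = Qj (a, b) := by
      intro a b
      by_cases h : QX a = 0
      · simp only [hV, if_pos h, h, zero_mul]
        have h1 := hQj_le_QX a b
        have h2 := hQjnn (a, b)
        linarith [h.symm ▸ h1]
      · simp only [hV, if_neg h]
        rw [mul_comm, div_mul_cancel₀ _ h]
    have hVcond : IsCondPMF V := by
      intro a
      by_cases h : QX a = 0
      · constructor
        · intro b; simp only [hV, if_pos h]; positivity
        · simp only [hV, if_pos h]
          rw [Finset.sum_const, Finset.card_univ, nsmul_eq_mul, mul_inv_cancel₀ hcardZ.ne']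
      · constructor
        · intro b
          simp only [hV, if_neg h]
          exact div_nonneg (hQjnn _) (hQXnn a)
        · simp only [hV, if_neg h]
          rw [← Finset.sum_div]
          rw [show ∑ b, Qj (a, b) = QX a from (by simp only [hQX])]
          exact div_self h
    have hVD : (∑ x', ∑ z', QX x' * V x' z' * d x' z') ≤ D := by
      calc ∑ x', ∑ z', QX x' * V x' z' * d x' z'
          = ∑ x', ∑ z', Qj (x', z') * d x' z' := by
            refine Finset.sum_congr rfl fun a _ => Finset.sum_congr rfl fun b _ => ?_
            rw [hVkey a b]
        _ = ∑ p : X × Z, Qj p * d p.1 p.2 :=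
            (Fintype.sum_prod_type (f := fun p : X × Z => Qj p * d p.1 p.2)).symm
        _ ≤ D := hDle
    have hRDFle : RDF QX d D ≤ mutualInfo Qj := by
      have h := RDF_le QX hQXpmf d D V hVcond hVD
      have heq : (fun p : X × Z => QX p.1 * V p.1 p.2) = Qj := by
        funext p
        exact hVkey p.1 p.2
      rw [heq] at h
      exact h
    have hEle : E ≤ mutualInfo Qj + relEnt QX P := by
      have h1 : E ≤ RDF QX d D + relEnt QX P := by
        rw [hE]
        apply csInf_le
        · refine ⟨-(2 * (Fintype.card X : ℝ)), ?_⟩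
          rintro v ⟨Q', hQ', rfl⟩
          have h2 := RDF_nonneg Q' hQ' d D
          have h3 := relEnt_ge Q' P hQ' hP
          linarith
        · exact ⟨QX, hQXpmf, rfl⟩
      linarith [hRDFle]
    have hmono : (2:ℝ) ^ (-(n:ℝ) * (mutualInfo Qj + relEnt QX P)) ≤ 2 ^ (-(n:ℝ) * E) := by
      apply (Real.rpow_le_rpow_left_iff one_lt_two).mpr
      nlinarith [hEle, hnR]
    calc ∑ x ∈ Finset.univ.filter (fun x => τ x = t), iidPMF P n x
        ≤ c := hstep1
      _ = 2 ^ (-(n:ℝ) * (mutualInfo Qj + relEnt QX P)) := hc2.symm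
      _ ≤ 2 ^ (-(n:ℝ) * E) := hmono
  have hpart := Finset.sum_fiberwise_of_maps_to
    (fun (x : Fin n → X) (_ : x ∈ Finset.univ) => Finset.mem_univ (τ x))
    (fun x => iidPMF P n x * (if dseq d x z ≤ D then (1:ℝ) else 0))
  rw [← hpart]
  calc ∑ t : X × Z → Fin (n+1), ∑ x ∈ Finset.univ.filter (fun x => τ x = t),
        iidPMF P n x * (if dseq d x z ≤ D then (1:ℝ) else 0)
      ≤ ∑ _t : X × Z → Fin (n+1), (2:ℝ) ^ (-(n:ℝ) * E) :=
        Finset.sum_le_sum fun t _ => hbound t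
    _ = (Fintype.card (X × Z → Fin (n+1)) : ℝ) * 2 ^ (-(n:ℝ) * E) := by
        rw [Finset.sum_const, Finset.card_univ, nsmul_eq_mul]
    _ = ((n:ℝ) + 1) ^ (Fintype.card X * Fintype.card Z) * 2 ^ (-(n:ℝ) * E) := by
        rw [Fintype.card_fun, Fintype.card_fin, Fintype.card_prod]
        push_cast
        ring
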